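/- There exists a constant c > 0 such that for all n ≥ 1, the diffusion state distance DSD_1(𝟎,𝟏) on the hypercube Q_n between the all-zero string 𝟎 and the all-one string 𝟏 satisfies DSD_1(𝟎,𝟏) ≥ c·n; that is, DSD_1(𝟎,𝟏) = Ω(n). -/

import Mathlib

/-- The hypercube graph `Q_n`: vertices are binary strings of length `n`, with edges joining
pairs of strings differing in exactly one coordinate. -/
def hypercubeGraph (n : ℕ) : SimpleGraph (Fin n → Bool) where
  Adj x y := hammingDist x y = 1
  symm := ⟨fun x y h => (hammingDist_comm y x).trans h⟩
  loopless := ⟨fun x h => absurd ((hammingDist_self x).symm.trans h) (by omega)⟩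

instance hypercubeGraphAdjDecidable (n : ℕ) : DecidableRel (hypercubeGraph n).Adj :=
  fun x y => inferInstanceAs (Decidable (hammingDist x y = 1))

/-! The spin function `s x = ∑ i, (-1) ^ x i` is an eigenvector of `I - D⁻¹A` on `Q_n` with
eigenvalue `2 / n`, since flipping bit `i` changes `s` by `-2 (-1) ^ x i`. Pairing the row
difference `r = 𝔾 𝟎 - 𝔾 𝟏` with `s` and using `𝔾 (I - D⁻¹A) = I - 𝟙 π` gives
`(2 / n) ⟪r, s⟫ = s 𝟎 - s 𝟏 = 2n`, so `⟪r, s⟫ = n²`; as `|s| ≤ n`, this forces `‖r‖₁ ≥ n`. -/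

open Finset Matrix

theorem mul_row_sub_dotProduct_of_mulVec_eq_smul {V R : Type*} [Fintype V] [DecidableEq V]
    [CommRing R] {G M : Matrix V V R} {π : V → R}
    (hGM : ∀ x y, (G * M) x y = (if x = y then 1 else 0) - π y)
    {f : V → R} {a : R} (hf : M *ᵥ f = a • f) (u v : V) :
    a * ((G u - G v) ⬝ᵥ f) = f u - f v := by
  have hrow : (G u - G v) ᵥ* M = Pi.single u 1 - Pi.single v 1 := by
    ext y
    simp [sub_vecMul, ← mul_apply_eq_vecMul, hGM, Pi.single_apply, eq_comm]
  calc a * ((G u - G v) ⬝ᵥ f) = (G u - G v) ⬝ᵥ (M *ᵥ f) := by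
        rw [hf, dotProduct_smul, smul_eq_mul]
    _ = ((G u - G v) ᵥ* M) ⬝ᵥ f := dotProduct_mulVec ..
    _ = f u - f v := by
        rw [hrow, sub_dotProduct, single_dotProduct, single_dotProduct, one_mul, one_mul]

theorem abs_dotProduct_le_sum_abs_mul {V : Type*} [Fintype V] (r : V → ℝ) {f : V → ℝ} {B : ℝ}
    (hf : ∀ j, |f j| ≤ B) : |r ⬝ᵥ f| ≤ (∑ j, |r j|) * B :=
  calc |r ⬝ᵥ f| ≤ ∑ j, |r j * f j| := abs_sum_le_sum_abs _ _
    _ ≤ ∑ j, |r j| * B := sum_le_sum fun j _ => by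
        rw [abs_mul]; exact mul_le_mul_of_nonneg_left (hf j) (abs_nonneg _)
    _ = (∑ j, |r j|) * B := (sum_mul ..).symm

namespace hypercubeGraph

variable {n : ℕ}

def spinSum (x : Fin n → Bool) : ℝ := ∑ i, if x i then -1 else 1

theorem spinSum_update_not (x : Fin n → Bool) (i : Fin n) :
    spinSum (Function.update x i (!x i)) = spinSum x - 2 * (if x i then -1 else 1) := by
  unfold spinSum
  rw [← add_sum_erase _ _ (mem_univ i), ← add_sum_erase _ _ (mem_univ i)]
  have hrest : ∑ j ∈ univ.erase i, (if Function.update x i (!x i) j then (-1 : ℝ) else 1)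
      = ∑ j ∈ univ.erase i, (if x j then (-1 : ℝ) else 1) :=
    sum_congr rfl fun j hj => by rw [Function.update_of_ne (ne_of_mem_erase hj)]
  rw [hrest]
  cases x i <;> simp <;> ring

theorem abs_spinSum_le (x : Fin n → Bool) : |spinSum x| ≤ n :=
  calc |spinSum x| ≤ ∑ i, |(if x i then (-1 : ℝ) else 1)| := abs_sum_le_sum_abs _ _
    _ = n := by simp [apply_ite]

@[simp] theorem spinSum_false : spinSum (fun _ : Fin n => false) = n := by simp [spinSum]

@[simp] theorem spinSum_true : spinSum (fun _ : Fin n => true) = -n := by simp [spinSum]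

theorem adj_iff {x y : Fin n → Bool} :
    (hypercubeGraph n).Adj x y ↔ ∃ i, Function.update x i (!x i) = y := by
  change hammingDist x y = 1 ↔ _
  rw [hammingDist, card_eq_one]
  refine exists_congr fun i => ?_
  simp only [Finset.ext_iff, funext_iff, mem_filter, mem_univ, true_and, mem_singleton]
  refine forall_congr' fun j => ?_
  rcases eq_or_ne j i with rfl | hji
  · cases x j <;> cases y j <;> simp
  · rw [Function.update_of_ne hji]
    cases x j <;> cases y j <;> simp [hji]

theorem update_not_injective (x : Fin n → Bool) :
    Function.Injective fun i => Function.update x i (!x i) := by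
  intro i j hij
  by_contra hne
  have := congrFun hij i
  simp [Function.update_of_ne hne] at this

theorem neighborFinset_eq (x : Fin n → Bool) :
    (hypercubeGraph n).neighborFinset x = univ.map ⟨_, update_not_injective x⟩ := by
  ext y
  simp [adj_iff]

theorem adjMatrix_mulVec_spinSum :
    (hypercubeGraph n).adjMatrix ℝ *ᵥ spinSum = ((n : ℝ) - 2) • spinSum := by
  ext x
  rw [SimpleGraph.adjMatrix_mulVec_apply, neighborFinset_eq, sum_map]
  simp only [Function.Embedding.coeFn_mk, spinSum_update_not, sum_sub_distrib, ← mul_sum,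
    sum_const, card_univ, Fintype.card_fin, nsmul_eq_mul, Pi.smul_apply, smul_eq_mul]
  rw [spinSum]
  ring

theorem transition_mulVec_spinSum (hn : n ≠ 0) :
    (1 - diagonal (fun _ => (n : ℝ)⁻¹) * (hypercubeGraph n).adjMatrix ℝ) *ᵥ spinSum
      = (2 / n : ℝ) • spinSum := by
  ext x
  rw [sub_mulVec, one_mulVec, ← mulVec_mulVec, adjMatrix_mulVec_spinSum]
  simp only [Pi.sub_apply, mulVec_diagonal, Pi.smul_apply, smul_eq_mul]
  field_simp
  ring

end hypercubeGraph

open hypercubeGraph in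
/-- There is a constant `c > 0` such that for all `n ≥ 1` the diffusion
state distance `DSD_1(𝟎,𝟏)` on the hypercube `Q_n` between the all-zero string and the
all-one string satisfies `DSD_1(𝟎,𝟏) ≥ c·n`; that is, `DSD_1(𝟎,𝟏) = Ω(n)`. -/
theorem dsd_one_hypercube_antipodal_lower_bound :
    ∃ c : ℝ, 0 < c ∧
      ∀ (n : ℕ), 1 ≤ n →
      ∀ (𝔾 : Matrix (Fin n → Bool) (Fin n → Bool) ℝ),
        (∀ x y : Fin n → Bool,
          (𝔾 * (1 - ((Matrix.diagonal fun _ => ((n : ℝ))⁻¹ :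
                  Matrix (Fin n → Bool) (Fin n → Bool) ℝ))
              * (hypercubeGraph n).adjMatrix ℝ)) x y
            = (if x = y then (1 : ℝ) else 0) - (n : ℝ) / ((n : ℝ) * 2 ^ n)) →
        (∀ x : Fin n → Bool, ∑ y, 𝔾 x y = 0) →
        c * (n : ℝ) ≤ ∑ j, |𝔾 (fun _ => false) j - 𝔾 (fun _ => true) j| := by
  refine ⟨1, one_pos, fun n hn 𝔾 hG _ => ?_⟩
  have hn0 : (0 : ℝ) < n := by exact_mod_cast hn
  set r := 𝔾 (fun _ => false) - 𝔾 (fun _ => true)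
  have hpair := mul_row_sub_dotProduct_of_mulVec_eq_smul hG
    (transition_mulVec_spinSum (by omega)) (fun _ => false) (fun _ => true)
  rw [spinSum_false, spinSum_true] at hpair
  have hdot : r ⬝ᵥ spinSum = (n : ℝ) ^ 2 := by
    field_simp at hpair
    linarith
  have hholder := abs_dotProduct_le_sum_abs_mul r (abs_spinSum_le (n := n))
  rw [hdot, abs_of_nonneg (by positivity), sq] at hholder
  rw [one_mul]
  exact le_of_mul_le_mul_right hholder hn0
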